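/- Let (X_t)_{t=1}^T be adapted to a filtration (F_t) with E[X_t | F_{t-1}] = 0, and suppose L_t ≤ X_t ≤ U_t almost surely where L_t, U_t are F_{t-1}-measurable. Set S_t = ∑_{s≤t} X_s and V_t = ∑_{s≤t} (U_s - L_s)². Then for all b > 0 and c > 0, P(∃ t ≤ T : |S_t| ≥ b and V_t ≤ c²) ≤ 2·exp(-2b²/c²). -/

import Mathlib

/-!
For `θ > 0`, the conditional Hoeffding lemma (the bounds `L t`, `U t` are known given `F (t - 1)`)
makes `exp (θ S_t - θ² V_t / 8)` a supermartingale. As `V` is predictable and nondecreasing, keeping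
the increment at time `t` only while `t ≤ T` and `V_t ≤ c²` stops `X` at a predictable time: the
event is unchanged, and afterwards `V ≤ c²` everywhere, so `E exp (θ S_T) ≤ exp (θ² c² / 8)`.
Doob's maximal inequality for the submartingale `exp (θ S_t)` with `θ = 4 b / c²` then bounds each
of the two one-sided events by `exp (-2 b² / c²)`.
-/

open MeasureTheory ProbabilityTheory Real
open scoped ENNReal NNReal

lemma ConvexOn.le_add_slope_mul_sub {f : ℝ → ℝ} (hf : ConvexOn ℝ Set.univ f) {a b x : ℝ}
    (hax : a ≤ x) (hxb : x ≤ b) : f x ≤ f a + slope f a b * (x - a) := by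
  rcases hax.eq_or_lt with rfl | hax
  · simp
  have h := hf.slope_mono (Set.mem_univ a) ⟨Set.mem_univ x, hax.ne'⟩
    ⟨Set.mem_univ b, (hax.trans_le hxb).ne'⟩ hxb
  rw [slope_def_field, div_le_iff₀ (sub_pos.2 hax)] at h
  linarith

lemma add_slope_mul_sub_le_max (f : ℝ → ℝ) {a b x : ℝ} (hax : a ≤ x) (hxb : x ≤ b) :
    f a + slope f a b * (x - a) ≤ max (f a) (f b) := by
  have h : (b - a) * slope f a b = f b - f a := by
    rcases (hax.trans hxb).eq_or_lt with rfl | hab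
    · simp
    rw [slope_def_field]; field_simp
  rcases le_total 0 (slope f a b) with hs | hs
  · nlinarith [le_max_right (f a) (f b)]
  · nlinarith [le_max_left (f a) (f b)]

noncomputable def expChord (t l u x : ℝ) : ℝ :=
  exp (t * l) + slope (fun y ↦ exp (t * y)) l u * (x - l)

lemma exp_mul_le_expChord (t : ℝ) {l u x : ℝ} (hx : x ∈ Set.Icc l u) :
    exp (t * x) ≤ expChord t l u x :=
  (convexOn_exp.comp_linearMap (LinearMap.lsmul ℝ ℝ t)).le_add_slope_mul_sub hx.1 hx.2

lemma abs_expChord_le (t : ℝ) {l u x : ℝ} (hx : x ∈ Set.Icc l u) :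
    |expChord t l u x| ≤ exp (t * l) + exp (t * u) := by
  rw [abs_of_pos ((exp_pos _).trans_le (exp_mul_le_expChord t hx))]
  exact (add_slope_mul_sub_le_max (fun y ↦ exp (t * y)) hx.1 hx.2).trans
    (max_le_add_of_nonneg (exp_pos _).le (exp_pos _).le)

/-- Hoeffding's lemma in disguise: `expChord t l u 0` is the moment generating function at `t` of
the centred law on `{l, u}`. -/
lemma expChord_zero_le (t : ℝ) {l u : ℝ} (h0 : (0 : ℝ) ∈ Set.Icc l u) :
    expChord t l u 0 ≤ exp (t ^ 2 * (u - l) ^ 2 / 8) := by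
  obtain ⟨hl, hu⟩ := h0
  set p : unitInterval := ⟨-l / (u - l), div_nonneg (by linarith) (by linarith),
    div_le_one_of_le₀ (by linarith) (by linarith)⟩
  have hp : (p : ℝ) * (u - l) = -l := by
    rcases (hl.trans hu).eq_or_lt with h | h
    · simp [p, ← h, le_antisymm hl (h ▸ hu)]
    · simp only [p]; field_simp
  have hmean : ∫ x, x ∂(bernoulliMeasure u l p) = 0 := by
    rw [integral_bernoulliMeasure]; simp only [smul_eq_mul]; linear_combination hp
  have hsupport : ∀ᵐ x ∂(bernoulliMeasure u l p), id x ∈ Set.Icc l u := by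
    rw [ae_iff]
    exact bernoulliMeasure_apply_of_notMem_of_notMem p measurableSet_Icc.compl
      (by simp [hl.trans hu]) (by simp [hl.trans hu])
  calc expChord t l u 0 = mgf id (bernoulliMeasure u l p) t := by
        rw [expChord, mgf, integral_bernoulliMeasure, slope_def_field]
        simp only [id, smul_eq_mul, p]
        ring
    _ ≤ _ := (hasSubgaussianMGF_of_mem_Icc_of_integral_eq_zero aemeasurable_id hsupport
        hmean).mgf_le t
    _ = _ := by
        simp only [NNReal.coe_pow, NNReal.coe_div, coe_nnnorm, Real.norm_eq_abs,
          NNReal.coe_ofNat, div_pow, sq_abs]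
        ring_nf

section

variable {Ω : Type*} {m0 : MeasurableSpace Ω} {P : Measure Ω}

lemma ae_nonpos_of_condExp_eq_zero [IsFiniteMeasure P] {G : MeasurableSpace Ω} (hG : G ≤ m0)
    {Y l : Ω → ℝ} (hY : Integrable Y P) (hcond : P[Y|G] =ᵐ[P] 0) (hl : StronglyMeasurable[G] l)
    (hlY : ∀ᵐ ω ∂P, l ω ≤ Y ω) : ∀ᵐ ω ∂P, l ω ≤ 0 := by
  set A := {ω | 0 < l ω}
  have hA : MeasurableSet[G] A := measurableSet_lt measurable_const hl.measurable
  have hint : ∫ ω in A, Y ω ∂P = 0 := by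
    rw [← setIntegral_condExp hG hY hA]
    exact integral_eq_zero_of_ae (ae_restrict_of_ae hcond)
  have hpos : 0 ≤ᵐ[P.restrict A] Y := by
    rw [Filter.EventuallyLE, ae_restrict_iff' (hG _ hA)]
    filter_upwards [hlY] with ω h hω using hω.le.trans h
  have hzero := (integral_eq_zero_iff_of_nonneg_ae hpos hY.restrict).1 hint
  rw [Filter.EventuallyEq, ae_restrict_iff' (hG _ hA)] at hzero
  filter_upwards [hlY, hzero] with ω hlY hzero
  by_contra! hl
  have hY0 : Y ω = 0 := hzero hl
  linarith

lemma ae_mem_Icc_of_condExp_eq_zero [IsFiniteMeasure P] {G : MeasurableSpace Ω} (hG : G ≤ m0)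
    {Y l u : Ω → ℝ} (hY : Integrable Y P) (hcond : P[Y|G] =ᵐ[P] 0)
    (hl : StronglyMeasurable[G] l) (hu : StronglyMeasurable[G] u)
    (hbound : ∀ᵐ ω ∂P, Y ω ∈ Set.Icc (l ω) (u ω)) : ∀ᵐ ω ∂P, 0 ∈ Set.Icc (l ω) (u ω) := by
  have hcond' : P[-Y|G] =ᵐ[P] 0 := by
    filter_upwards [condExp_neg Y G, hcond] with ω h1 h2
    simp [h1, h2]
  filter_upwards [ae_nonpos_of_condExp_eq_zero hG hY hcond hl (hbound.mono fun _ h ↦ h.1),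
    ae_nonpos_of_condExp_eq_zero hG hY.neg hcond' hu.neg (hbound.mono fun _ h ↦ neg_le_neg h.2)]
    with ω hl hu
  exact ⟨hl, by simpa using hu⟩

lemma condExp_add_mul_ae_eq_of_condExp_eq_zero [IsFiniteMeasure P] {G : MeasurableSpace Ω}
    (hG : G ≤ m0) {α β Y : Ω → ℝ} (hα : StronglyMeasurable[G] α) (hβ : StronglyMeasurable[G] β)
    (hα_int : Integrable α P) (hβY : Integrable (fun ω ↦ β ω * Y ω) P) (hY : Integrable Y P)
    (hcond : P[Y|G] =ᵐ[P] 0) : P[fun ω ↦ α ω + β ω * Y ω|G] =ᵐ[P] α := by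
  refine (condExp_add hα_int hβY G).trans ?_
  rw [condExp_of_stronglyMeasurable hG hα hα_int]
  filter_upwards [condExp_mul_of_stronglyMeasurable_left hβ hβY hY, hcond] with ω h1 h2
  change α ω + P[β * Y|G] ω = α ω
  simp [h1, h2]

/-- Conditional Hoeffding lemma: `exp (t * Y)` lies below the chord of `y ↦ exp (t * y)` over
`[l, u]`, whose conditional expectation is its value at `0`. -/
lemma condExp_exp_mul_le [IsFiniteMeasure P] {G : MeasurableSpace Ω} (hG : G ≤ m0) (t : ℝ)
    {c : ℝ} {Y l u : Ω → ℝ} (hY : Integrable Y P) (hcond : P[Y|G] =ᵐ[P] 0)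
    (hl : StronglyMeasurable[G] l) (hu : StronglyMeasurable[G] u)
    (hbound : ∀ᵐ ω ∂P, Y ω ∈ Set.Icc (l ω) (u ω)) (hc : ∀ᵐ ω ∂P, u ω - l ω ≤ c) :
    P[fun ω ↦ exp (t * Y ω)|G] ≤ᵐ[P] fun ω ↦ exp (t ^ 2 * (u ω - l ω) ^ 2 / 8) := by
  have h0 := ae_mem_Icc_of_condExp_eq_zero hG hY hcond hl hu hbound
  set α : Ω → ℝ := fun ω ↦ expChord t (l ω) (u ω) 0
  set β : Ω → ℝ := fun ω ↦ slope (fun y ↦ exp (t * y)) (l ω) (u ω)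
  have hchord : ∀ ω, expChord t (l ω) (u ω) (Y ω) = α ω + β ω * Y ω := fun ω ↦ by
    simp only [α, β, expChord]; ring
  have hα : StronglyMeasurable[G] α := Measurable.stronglyMeasurable <| by
    simp only [α, expChord, slope_def_field]; fun_prop
  have hβ : StronglyMeasurable[G] β := Measurable.stronglyMeasurable <| by
    simp only [β, slope_def_field]; fun_prop
  have hdom : Integrable (fun ω ↦ exp (t * l ω) + exp (t * u ω)) P := by
    have hlu : ∀ᵐ ω ∂P, l ω ∈ Set.Icc (-c) 0 ∧ u ω ∈ Set.Icc 0 c := by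
      filter_upwards [h0, hc] with ω h1 h2
      exact ⟨⟨by linarith [h1.2], h1.1⟩, ⟨h1.2, by linarith [h1.1]⟩⟩
    exact (integrable_exp_mul_of_mem_Icc (hl.mono hG).measurable.aemeasurable
      (hlu.mono fun _ h ↦ h.1)).add (integrable_exp_mul_of_mem_Icc
        (hu.mono hG).measurable.aemeasurable (hlu.mono fun _ h ↦ h.2))
  have hα_int : Integrable α P := hdom.mono' (hα.mono hG).aestronglyMeasurable <| by
    filter_upwards [h0] with ω h using (Real.norm_eq_abs _).trans_le (abs_expChord_le t h)
  have hchord_int : Integrable (fun ω ↦ α ω + β ω * Y ω) P := by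
    refine hdom.mono' ((hα.mono hG).aestronglyMeasurable.add
      ((hβ.mono hG).aestronglyMeasurable.mul hY.aestronglyMeasurable)) ?_
    filter_upwards [hbound] with ω h
    rw [← hchord]
    exact (Real.norm_eq_abs _).trans_le (abs_expChord_le t h)
  have hβY : Integrable (fun ω ↦ β ω * Y ω) P :=
    (hchord_int.sub hα_int).congr (ae_of_all _ fun ω ↦ add_sub_cancel_left (α ω) _)
  have hexp_le : ∀ᵐ ω ∂P, exp (t * Y ω) ≤ α ω + β ω * Y ω := by
    filter_upwards [hbound] with ω h
    exact hchord ω ▸ exp_mul_le_expChord t h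
  have hexp_int : Integrable (fun ω ↦ exp (t * Y ω)) P := by
    refine hchord_int.mono'
      (continuous_exp.comp_aestronglyMeasurable (hY.aestronglyMeasurable.const_mul t)) ?_
    filter_upwards [hexp_le] with ω h
    rwa [Real.norm_eq_abs, abs_of_pos (exp_pos _)]
  calc P[fun ω ↦ exp (t * Y ω)|G] ≤ᵐ[P] P[fun ω ↦ α ω + β ω * Y ω|G] :=
        condExp_mono hexp_int hchord_int hexp_le
    _ =ᵐ[P] α := condExp_add_mul_ae_eq_of_condExp_eq_zero hG hα hβ hα_int hβY hY hcond
    _ ≤ᵐ[P] _ := by filter_upwards [h0] with ω h using expChord_zero_le t h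

theorem Martingale.submartingale_comp_convexOn [IsFiniteMeasure P] {ι : Type*} [Preorder ι]
    {F : Filtration ι m0} {S : ι → Ω → ℝ} (hS : Martingale S F P) {φ : ℝ → ℝ}
    (hφ : ConvexOn ℝ Set.univ φ) (hφc : Continuous φ)
    (hint : ∀ i, Integrable (fun ω ↦ φ (S i ω)) P) :
    Submartingale (fun i ω ↦ φ (S i ω)) F P := by
  refine ⟨fun i ↦ hφc.comp_stronglyMeasurable (hS.stronglyAdapted i), fun i j hij ↦ ?_, hint⟩
  filter_upwards [hS.condExp_ae_eq hij, hφ.map_condExp_le_univ (F.le i) hφc.lowerSemicontinuous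
    (hS.integrable j) (hint j)] with ω h1 h2
  simp only [Function.comp_apply, h1] at h2
  exact h2

/-- The paper's `V_t`. -/
def rangeSqSum (l u : ℕ → Ω → ℝ) (t : ℕ) (ω : Ω) : ℝ :=
  ∑ s ∈ Finset.Icc 1 t, (u s ω - l s ω) ^ 2

lemma rangeSqSum_neg (l u : ℕ → Ω → ℝ) : rangeSqSum (-u) (-l) = rangeSqSum l u := by
  ext t ω
  simp only [rangeSqSum, Pi.neg_apply, neg_sub_neg]

lemma rangeSqSum_mono (l u : ℕ → Ω → ℝ) (ω : Ω) : Monotone fun t ↦ rangeSqSum l u t ω :=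
  fun _ _ hst ↦ Finset.sum_le_sum_of_subset_of_nonneg (Finset.Icc_subset_Icc_right hst)
    fun _ _ _ ↦ sq_nonneg _

lemma sub_le_of_rangeSqSum_le {l u : ℕ → Ω → ℝ} {c : ℝ}
    (hV : ∀ t ω, rangeSqSum l u t ω ≤ c ^ 2) (hc : 0 ≤ c) (t : ℕ) (ω : Ω) :
    u (t + 1) ω - l (t + 1) ω ≤ c := by
  refine (abs_le_of_sq_le_sq' (le_trans ?_ (hV (t + 1) ω)) hc).2
  exact Finset.single_le_sum (f := fun s ↦ (u s ω - l s ω) ^ 2) (fun _ _ ↦ sq_nonneg _)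
    (Finset.right_mem_Icc.2 (Nat.le_add_left 1 t))

/-- Increments are indexed from `1`, as in the sums over `Finset.Icc 1 t`; the values at index `0`
are irrelevant. -/
structure MartingaleDiffBetween (Y l u : ℕ → Ω → ℝ) (F : Filtration ℕ m0) (P : Measure Ω) :
    Prop where
  stronglyMeasurable : ∀ t, StronglyMeasurable[F (t + 1)] (Y (t + 1))
  integrable : ∀ t, Integrable (Y (t + 1)) P
  condExp_eq_zero : ∀ t, P[Y (t + 1)|F t] =ᵐ[P] 0
  stronglyMeasurable_lower : ∀ t, StronglyMeasurable[F t] (l (t + 1))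
  stronglyMeasurable_upper : ∀ t, StronglyMeasurable[F t] (u (t + 1))
  mem_Icc : ∀ t, ∀ᵐ ω ∂P, Y (t + 1) ω ∈ Set.Icc (l (t + 1) ω) (u (t + 1) ω)

namespace MartingaleDiffBetween

variable {Y l u : ℕ → Ω → ℝ} {F : Filtration ℕ m0} {c : ℝ}

lemma neg (h : MartingaleDiffBetween Y l u F P) : MartingaleDiffBetween (-Y) (-u) (-l) F P where
  stronglyMeasurable t := (h.stronglyMeasurable t).neg
  integrable t := (h.integrable t).neg
  condExp_eq_zero t := by
    filter_upwards [condExp_neg (Y (t + 1)) (F t), h.condExp_eq_zero t] with ω h1 h2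
    simp [h1, h2]
  stronglyMeasurable_lower t := (h.stronglyMeasurable_upper t).neg
  stronglyMeasurable_upper t := (h.stronglyMeasurable_lower t).neg
  mem_Icc t := by
    filter_upwards [h.mem_Icc t] with ω h
    exact ⟨neg_le_neg h.2, neg_le_neg h.1⟩

lemma stronglyMeasurable_of_mem_Icc (h : MartingaleDiffBetween Y l u F P) {s t : ℕ}
    (hs : s ∈ Finset.Icc 1 t) : StronglyMeasurable[F t] (Y s) := by
  obtain ⟨s, rfl⟩ : ∃ r, s = r + 1 := Nat.exists_eq_add_of_le' (Finset.mem_Icc.1 hs).1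
  exact (h.stronglyMeasurable s).mono (F.mono (Finset.mem_Icc.1 hs).2)

lemma stronglyMeasurable_sum (h : MartingaleDiffBetween Y l u F P) (t : ℕ) :
    StronglyMeasurable[F t] (fun ω ↦ ∑ s ∈ Finset.Icc 1 t, Y s ω) :=
  Finset.stronglyMeasurable_fun_sum _ fun _ hs ↦ h.stronglyMeasurable_of_mem_Icc hs

lemma stronglyMeasurable_rangeSqSum (h : MartingaleDiffBetween Y l u F P) (t : ℕ) :
    StronglyMeasurable[F t] (rangeSqSum l u t) := by
  refine Finset.stronglyMeasurable_fun_sum _ fun s hs ↦ ?_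
  obtain ⟨s, rfl⟩ : ∃ r, s = r + 1 := Nat.exists_eq_add_of_le' (Finset.mem_Icc.1 hs).1
  have hst : F s ≤ F t := F.mono (by have := (Finset.mem_Icc.1 hs).2; omega)
  exact (((h.stronglyMeasurable_upper s).sub (h.stronglyMeasurable_lower s)).pow 2).mono hst

lemma martingale_sum [IsFiniteMeasure P] (h : MartingaleDiffBetween Y l u F P) :
    Martingale (fun t ω ↦ ∑ s ∈ Finset.Icc 1 t, Y s ω) F P := by
  refine martingale_of_condExp_sub_eq_zero_nat h.stronglyMeasurable_sum
    (fun t ↦ integrable_finsetSum _ fun s hs ↦ ?_) fun t ↦ ?_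
  · obtain ⟨s, rfl⟩ : ∃ r, s = r + 1 := Nat.exists_eq_add_of_le' (Finset.mem_Icc.1 hs).1
    exact h.integrable s
  · have hdiff : (fun ω ↦ ∑ s ∈ Finset.Icc 1 (t + 1), Y s ω) - (fun ω ↦ ∑ s ∈ Finset.Icc 1 t, Y s ω)
        = Y (t + 1) := by
      ext ω
      simp [Finset.sum_Icc_succ_top (Nat.le_add_left 1 t)]
    rw [hdiff]
    exact h.condExp_eq_zero t

lemma ae_abs_le [IsFiniteMeasure P] (h : MartingaleDiffBetween Y l u F P)
    (hc : ∀ t ω, u (t + 1) ω - l (t + 1) ω ≤ c) (t : ℕ) : ∀ᵐ ω ∂P, |Y (t + 1) ω| ≤ c := by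
  filter_upwards [h.mem_Icc t, ae_mem_Icc_of_condExp_eq_zero (F.le t) (h.integrable t)
    (h.condExp_eq_zero t) (h.stronglyMeasurable_lower t) (h.stronglyMeasurable_upper t)
    (h.mem_Icc t)] with ω hY h0
  have := hc t ω
  exact abs_le.2 ⟨by linarith [hY.1, h0.2], by linarith [hY.2, h0.1]⟩

lemma integrable_exp_mul_sum [IsFiniteMeasure P] (h : MartingaleDiffBetween Y l u F P)
    (hc : ∀ t ω, u (t + 1) ω - l (t + 1) ω ≤ c) (θ : ℝ) (t : ℕ) :
    Integrable (fun ω ↦ exp (θ * ∑ s ∈ Finset.Icc 1 t, Y s ω)) P := by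
  refine integrable_exp_mul_of_mem_Icc (a := -(t * c)) (b := t * c)
    ((h.stronglyMeasurable_sum t).mono (F.le t)).measurable.aemeasurable ?_
  filter_upwards [ae_all_iff.2 (h.ae_abs_le hc)] with ω hω
  refine abs_le.1 ((Finset.abs_sum_le_sum_abs _ _).trans ?_)
  calc ∑ s ∈ Finset.Icc 1 t, |Y s ω| ≤ ∑ _s ∈ Finset.Icc 1 t, c := by
        refine Finset.sum_le_sum fun s hs ↦ ?_
        obtain ⟨s, rfl⟩ : ∃ r, s = r + 1 := Nat.exists_eq_add_of_le' (Finset.mem_Icc.1 hs).1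
        exact hω s
    _ = t * c := by simp

lemma supermartingale_exp [IsFiniteMeasure P] (h : MartingaleDiffBetween Y l u F P)
    (hc : ∀ t ω, u (t + 1) ω - l (t + 1) ω ≤ c) (θ : ℝ) :
    Supermartingale (fun t ω ↦ exp (θ * ∑ s ∈ Finset.Icc 1 t, Y s ω -
      θ ^ 2 / 8 * rangeSqSum l u t ω)) F P := by
  set M : ℕ → Ω → ℝ := fun t ω ↦ exp (θ * ∑ s ∈ Finset.Icc 1 t, Y s ω -
      θ ^ 2 / 8 * rangeSqSum l u t ω)
  have hM : ∀ t, StronglyMeasurable[F t] (M t) := fun t ↦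
    continuous_exp.comp_stronglyMeasurable
      (((h.stronglyMeasurable_sum t).const_mul θ).sub
        ((h.stronglyMeasurable_rangeSqSum t).const_mul _))
  have hM_int : ∀ t, Integrable (M t) P := by
    refine fun t ↦ (h.integrable_exp_mul_sum hc θ t).mono'
      ((hM t).mono (F.le t)).aestronglyMeasurable (ae_of_all _ fun ω ↦ ?_)
    rw [Real.norm_eq_abs, abs_of_pos (exp_pos _), exp_le_exp, sub_le_self_iff]
    exact mul_nonneg (by positivity) (Finset.sum_nonneg fun _ _ ↦ sq_nonneg _)
  refine supermartingale_nat hM hM_int fun t ↦ ?_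
  set W : Ω → ℝ := fun ω ↦ M t ω * exp (-(θ ^ 2 / 8 * (u (t + 1) ω - l (t + 1) ω) ^ 2))
  have hW : StronglyMeasurable[F t] W := (hM t).mul (continuous_exp.comp_stronglyMeasurable
    ((((h.stronglyMeasurable_upper t).sub (h.stronglyMeasurable_lower t)).pow 2).const_mul _).neg)
  have hsplit : M (t + 1) = W * fun ω ↦ exp (θ * Y (t + 1) ω) := by
    ext ω
    simp only [M, W, rangeSqSum, Pi.mul_apply, Finset.sum_Icc_succ_top (Nat.le_add_left 1 t),
      ← exp_add]
    ring_nf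
  have hexpY : Integrable (fun ω ↦ exp (θ * Y (t + 1) ω)) P :=
    integrable_exp_mul_of_mem_Icc ((h.stronglyMeasurable t).mono (F.le _)).measurable.aemeasurable
      ((h.ae_abs_le hc t).mono fun _ h ↦ abs_le.1 h)
  rw [hsplit]
  filter_upwards [condExp_mul_of_stronglyMeasurable_left hW (hsplit ▸ hM_int (t + 1)) hexpY,
    condExp_exp_mul_le (F.le t) θ (h.integrable t) (h.condExp_eq_zero t)
      (h.stronglyMeasurable_lower t) (h.stronglyMeasurable_upper t) (h.mem_Icc t)
      (ae_of_all _ (hc t))] with ω h1 h2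
  rw [h1, Pi.mul_apply]
  calc W ω * P[fun ω ↦ exp (θ * Y (t + 1) ω)|F t] ω
      ≤ W ω * exp (θ ^ 2 * (u (t + 1) ω - l (t + 1) ω) ^ 2 / 8) := by gcongr
    _ = M t ω := by
      simp only [W, mul_assoc, ← exp_add]
      ring_nf
      simp

lemma integral_exp_mul_sum_le [IsProbabilityMeasure P] (h : MartingaleDiffBetween Y l u F P)
    (hV : ∀ t ω, rangeSqSum l u t ω ≤ c ^ 2) (hc : 0 ≤ c) (θ : ℝ) (t : ℕ) :
    ∫ ω, exp (θ * ∑ s ∈ Finset.Icc 1 t, Y s ω) ∂P ≤ exp (θ ^ 2 * c ^ 2 / 8) := by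
  have hstep := sub_le_of_rangeSqSum_le hV hc
  have hM := h.supermartingale_exp hstep θ
  calc ∫ ω, exp (θ * ∑ s ∈ Finset.Icc 1 t, Y s ω) ∂P
      ≤ ∫ ω, exp (θ ^ 2 * c ^ 2 / 8) * exp (θ * ∑ s ∈ Finset.Icc 1 t, Y s ω -
          θ ^ 2 / 8 * rangeSqSum l u t ω) ∂P := by
        refine integral_mono (h.integrable_exp_mul_sum hstep θ t)
          ((hM.integrable t).const_mul _) fun ω ↦ ?_
        rw [← exp_add, exp_le_exp]
        have := mul_le_mul_of_nonneg_left (hV t ω) (by positivity : (0 : ℝ) ≤ θ ^ 2 / 8)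
        linarith
    _ ≤ exp (θ ^ 2 * c ^ 2 / 8) * 1 := by
        rw [integral_const_mul]
        gcongr
        simpa [rangeSqSum] using hM.setIntegral_le (Nat.zero_le t) MeasurableSet.univ
    _ = exp (θ ^ 2 * c ^ 2 / 8) := mul_one _

theorem measure_exists_sum_ge_le [IsProbabilityMeasure P] (h : MartingaleDiffBetween Y l u F P)
    (hV : ∀ t ω, rangeSqSum l u t ω ≤ c ^ 2) {b : ℝ} (hb : 0 ≤ b) (hc : 0 < c) (T : ℕ) :
    P {ω | ∃ t ≤ T, b ≤ ∑ s ∈ Finset.Icc 1 t, Y s ω} ≤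
      ENNReal.ofReal (exp (-2 * b ^ 2 / c ^ 2)) := by
  set θ := 4 * b / c ^ 2
  have hθ : 0 ≤ θ := by positivity
  have hsub : Submartingale (fun t ω ↦ exp (θ * ∑ s ∈ Finset.Icc 1 t, Y s ω)) F P :=
    Martingale.submartingale_comp_convexOn (h.martingale_sum.smul θ) convexOn_exp continuous_exp
      (h.integrable_exp_mul_sum (sub_le_of_rangeSqSum_le hV hc.le) θ)
  set ε : ℝ≥0 := (exp (θ * b)).toNNReal
  set A := {ω | (ε : ℝ) ≤ (Finset.range (T + 1)).sup' Finset.nonempty_range_add_one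
    fun k ↦ exp (θ * ∑ s ∈ Finset.Icc 1 k, Y s ω)}
  have hsubset : {ω | ∃ t ≤ T, b ≤ ∑ s ∈ Finset.Icc 1 t, Y s ω} ⊆ A := by
    rintro ω ⟨t, htT, hbt⟩
    refine (Real.coe_toNNReal _ (exp_pos _).le).trans_le
      (le_trans ?_ (Finset.le_sup' _ (Finset.mem_range_succ_iff.2 htT)))
    exact exp_le_exp.2 (mul_le_mul_of_nonneg_left hbt hθ)
  calc P {ω | ∃ t ≤ T, b ≤ ∑ s ∈ Finset.Icc 1 t, Y s ω}
      ≤ ENNReal.ofReal (exp (-(θ * b))) * (ε * P A) := by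
        rw [← mul_assoc, show (ε : ℝ≥0∞) = ENNReal.ofReal (exp (θ * b)) from rfl,
          ← ENNReal.ofReal_mul (exp_pos _).le, ← exp_add, neg_add_cancel, exp_zero,
          ENNReal.ofReal_one, one_mul]
        exact measure_mono hsubset
    _ ≤ ENNReal.ofReal (exp (-(θ * b))) * ENNReal.ofReal (exp (θ ^ 2 * c ^ 2 / 8)) := by
        gcongr
        refine (maximal_ineq hsub (fun _ _ ↦ (exp_pos _).le) T).trans ?_
        refine ENNReal.ofReal_le_ofReal ((setIntegral_le_integral (hsub.integrable T)
          (ae_of_all _ fun _ ↦ (exp_pos _).le)).trans ?_)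
        exact h.integral_exp_mul_sum_le hV hc.le θ T
    _ = ENNReal.ofReal (exp (-2 * b ^ 2 / c ^ 2)) := by
        rw [← ENNReal.ofReal_mul (exp_pos _).le, ← exp_add]
        congr 2
        simp only [θ]
        field_simp
        ring

theorem measure_exists_abs_sum_ge_le [IsProbabilityMeasure P]
    (h : MartingaleDiffBetween Y l u F P)
    (hV : ∀ t ω, rangeSqSum l u t ω ≤ c ^ 2) {b : ℝ} (hb : 0 ≤ b) (hc : 0 < c) (T : ℕ) :
    P {ω | ∃ t ≤ T, b ≤ |∑ s ∈ Finset.Icc 1 t, Y s ω|} ≤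
      ENNReal.ofReal (2 * exp (-2 * b ^ 2 / c ^ 2)) := by
  have hV' : ∀ t ω, rangeSqSum (-u) (-l) t ω ≤ c ^ 2 := by rwa [rangeSqSum_neg]
  calc P {ω | ∃ t ≤ T, b ≤ |∑ s ∈ Finset.Icc 1 t, Y s ω|}
      ≤ P ({ω | ∃ t ≤ T, b ≤ ∑ s ∈ Finset.Icc 1 t, Y s ω} ∪
          {ω | ∃ t ≤ T, b ≤ ∑ s ∈ Finset.Icc 1 t, (-Y) s ω}) := by
        refine measure_mono fun ω ⟨t, htT, hbt⟩ ↦ ?_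
        simp only [Pi.neg_apply, Finset.sum_neg_distrib]
        exact (le_abs'.1 hbt).symm.imp (fun h ↦ ⟨t, htT, h⟩) (fun h ↦ ⟨t, htT, le_neg.1 h⟩)
    _ ≤ ENNReal.ofReal (exp (-2 * b ^ 2 / c ^ 2)) + ENNReal.ofReal (exp (-2 * b ^ 2 / c ^ 2)) :=
        (measure_union_le _ _).trans (add_le_add (h.measure_exists_sum_ge_le hV hb hc T)
          (h.neg.measure_exists_sum_ge_le hV' hb hc T))
    _ = ENNReal.ofReal (2 * exp (-2 * b ^ 2 / c ^ 2)) := by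
        rw [← ENNReal.ofReal_add (exp_pos _).le (exp_pos _).le, two_mul]

end MartingaleDiffBetween

lemma sum_indicator_le_of_partialSum_le {a : ℕ → ℝ} (ha : ∀ s, 0 ≤ a s) {C : ℝ} (hC : 0 ≤ C)
    {S : Set ℕ} (hS : ∀ s ∈ S, ∑ r ∈ Finset.Icc 1 s, a r ≤ C) (t : ℕ) :
    ∑ s ∈ Finset.Icc 1 t, S.indicator a s ≤ C := by
  induction t with
  | zero => simpa using hC
  | succ t ih =>
    rw [Finset.sum_Icc_succ_top (Nat.le_add_left 1 t)]
    by_cases h : t + 1 ∈ S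
    · calc _ ≤ ∑ s ∈ Finset.Icc 1 t, a s + a (t + 1) := by
            gcongr with s
            · exact Set.indicator_le_self' (fun s _ ↦ ha s) s
            · exact Set.indicator_le_self' (fun s _ ↦ ha s) _
        _ = ∑ s ∈ Finset.Icc 1 (t + 1), a s :=
            (Finset.sum_Icc_succ_top (Nat.le_add_left 1 t) a).symm
        _ ≤ C := hS _ h
    · rwa [Set.indicator_of_notMem h, add_zero]

lemma rangeSqSum_indicator_le {c : ℝ} {L U : ℕ → Ω → ℝ} {A : ℕ → Set Ω}
    (hA : ∀ t, A t ⊆ {ω | rangeSqSum L U t ω ≤ c ^ 2}) (t : ℕ) (ω : Ω) :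
    rangeSqSum (fun s ↦ (A s).indicator (L s)) (fun s ↦ (A s).indicator (U s)) t ω ≤ c ^ 2 := by
  have hterm : ∀ s, ((A s).indicator (U s) ω - (A s).indicator (L s) ω) ^ 2 =
      {s | ω ∈ A s}.indicator (fun s ↦ (U s ω - L s ω) ^ 2) s := fun s ↦ by
    by_cases hω : ω ∈ A s <;> simp [hω]
  refine (Finset.sum_congr rfl fun s _ ↦ hterm s).trans_le ?_
  exact sum_indicator_le_of_partialSum_le (fun _ ↦ sq_nonneg _) (sq_nonneg c)
    (fun s hs ↦ hA s hs) t

lemma stronglyMeasurable_rangeSqSum_of_predictable {F : Filtration ℕ m0} {T : ℕ}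
    {L U : ℕ → Ω → ℝ} (hLpred : ∀ t ∈ Finset.Icc 1 T, StronglyMeasurable[F (t - 1)] (L t))
    (hUpred : ∀ t ∈ Finset.Icc 1 T, StronglyMeasurable[F (t - 1)] (U t)) {t : ℕ} (ht : t ≤ T) :
    StronglyMeasurable[F (t - 1)] (rangeSqSum L U t) := by
  refine Finset.stronglyMeasurable_fun_sum _ fun s hs ↦ ?_
  have hs' := Finset.mem_Icc.1 hs
  have hsT : s ∈ Finset.Icc 1 T := Finset.mem_Icc.2 ⟨hs'.1, hs'.2.trans ht⟩
  exact (((hUpred s hsT).sub (hLpred s hsT)).pow 2).mono (F.mono (by omega))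

lemma martingaleDiffBetween_indicator [IsFiniteMeasure P] {F : Filtration ℕ m0} {T : ℕ}
    {X L U : ℕ → Ω → ℝ} {A : ℕ → Set Ω} (hA : ∀ t, MeasurableSet[F t] (A (t + 1)))
    (hAT : ∀ t, T ≤ t → A (t + 1) = ∅) (hadapted : Adapted F X)
    (hint : ∀ t ∈ Finset.Icc 1 T, Integrable (X t) P)
    (hcond : ∀ t ∈ Finset.Icc 1 T, P[X t | F (t - 1)] =ᵐ[P] 0)
    (hLpred : ∀ t ∈ Finset.Icc 1 T, StronglyMeasurable[F (t - 1)] (L t))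
    (hUpred : ∀ t ∈ Finset.Icc 1 T, StronglyMeasurable[F (t - 1)] (U t))
    (hbound : ∀ t ∈ Finset.Icc 1 T, ∀ᵐ ω ∂P, L t ω ≤ X t ω ∧ X t ω ≤ U t ω) :
    MartingaleDiffBetween (fun t ↦ (A t).indicator (X t)) (fun t ↦ (A t).indicator (L t))
      (fun t ↦ (A t).indicator (U t)) F P := by
  have hcases : ∀ t, t + 1 ∈ Finset.Icc 1 T ∨ A (t + 1) = ∅ := fun t ↦ by
    rcases lt_or_ge t T with ht | ht
    · exact Or.inl (Finset.mem_Icc.2 ⟨by omega, ht⟩)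
    · exact Or.inr (hAT t ht)
  refine ⟨fun t ↦ ?_, fun t ↦ ?_, fun t ↦ ?_, fun t ↦ ?_, fun t ↦ ?_, fun t ↦ ?_⟩ <;>
    rcases hcases t with ht | hempty
  · exact (hadapted (t + 1)).stronglyMeasurable.indicator (F.mono t.le_succ _ (hA t))
  · simp [hempty, stronglyMeasurable_const]
  · exact (hint _ ht).indicator (F.le t _ (hA t))
  · simp [hempty]
  · have hcond' := hcond _ ht
    rw [Nat.add_sub_cancel] at hcond'
    filter_upwards [condExp_indicator (hint _ ht) (hA t), hcond'] with ω h1 h2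
    simp [h1, h2]
  · simp only [hempty, Set.indicator_empty, condExp_const (F.le t)]
    rfl
  · exact (Nat.add_sub_cancel t 1 ▸ hLpred _ ht).indicator (hA t)
  · simp [hempty, stronglyMeasurable_const]
  · exact (Nat.add_sub_cancel t 1 ▸ hUpred _ ht).indicator (hA t)
  · simp [hempty, stronglyMeasurable_const]
  · filter_upwards [hbound _ ht] with ω h
    by_cases hω : ω ∈ A (t + 1) <;> simp [hω, h.1, h.2]
  · simp [hempty]

end

/-- Hoeffding-type maximal inequality for martingale difference sequences with
predictable bounds (van de Geer 2002). -/
theorem stmt_12 {Ω : Type*} {m0 : MeasurableSpace Ω} (P : Measure Ω)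
    [IsProbabilityMeasure P] (F : Filtration ℕ m0) (T : ℕ)
    (X L U : ℕ → Ω → ℝ) (hadapted : Adapted F X)
    (hint : ∀ t, Integrable (X t) P)
    (hcond : ∀ t ∈ Finset.Icc 1 T, P[X t | F (t - 1)] =ᵐ[P] 0)
    (hLpred : ∀ t ∈ Finset.Icc 1 T, StronglyMeasurable[F (t - 1)] (L t))
    (hUpred : ∀ t ∈ Finset.Icc 1 T, StronglyMeasurable[F (t - 1)] (U t))
    (hbound : ∀ t ∈ Finset.Icc 1 T, ∀ᵐ ω ∂P, L t ω ≤ X t ω ∧ X t ω ≤ U t ω)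
    (b c : ℝ) (hb : 0 < b) (hc : 0 < c) :
    (P {ω | ∃ t ∈ Finset.Icc 1 T,
        b ≤ |∑ s ∈ Finset.Icc 1 t, X s ω| ∧
        ∑ s ∈ Finset.Icc 1 t, (U s ω - L s ω) ^ 2 ≤ c ^ 2}).toReal ≤
      2 * Real.exp (-2 * b ^ 2 / c ^ 2) := by
  set A : ℕ → Set Ω := fun t ↦ {ω | t ≤ T ∧ rangeSqSum L U t ω ≤ c ^ 2}
  have hA : ∀ t, MeasurableSet[F t] (A (t + 1)) := fun t ↦ by
    by_cases htT : t + 1 ≤ T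
    · simpa [A, htT] using measurableSet_le
        (stronglyMeasurable_rangeSqSum_of_predictable hLpred hUpred htT).measurable
        measurable_const
    · simp [A, htT]
  have hmds := martingaleDiffBetween_indicator hA (fun t ht ↦ by ext; simp [A]; omega) hadapted
    (fun t _ ↦ hint t) hcond hLpred hUpred hbound
  have hsubset : {ω | ∃ t ∈ Finset.Icc 1 T,
      b ≤ |∑ s ∈ Finset.Icc 1 t, X s ω| ∧ rangeSqSum L U t ω ≤ c ^ 2} ⊆
      {ω | ∃ t ≤ T, b ≤ |∑ s ∈ Finset.Icc 1 t, (A s).indicator (X s) ω|} := by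
    rintro ω ⟨t, ht, hbt, hVt⟩
    have hmem : ∀ s ∈ Finset.Icc 1 t, ω ∈ A s := fun s hs ↦
      ⟨(Finset.mem_Icc.1 hs).2.trans (Finset.mem_Icc.1 ht).2,
        (rangeSqSum_mono L U ω (Finset.mem_Icc.1 hs).2).trans hVt⟩
    refine ⟨t, (Finset.mem_Icc.1 ht).2, hbt.trans_eq (congrArg _ ?_)⟩
    exact Finset.sum_congr rfl fun s hs ↦ (Set.indicator_of_mem (hmem s hs) _).symm
  exact ENNReal.toReal_le_of_le_ofReal (by positivity) ((measure_mono hsubset).trans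
    (hmds.measure_exists_abs_sum_ge_le (rangeSqSum_indicator_le (fun _ _ h ↦ h.2)) hb.le hc T))
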